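/- Let R be an irreducible root system in E, and for α ∈ R, k ∈ ℤ let H_{α;k}^+ = {x ∈ E : ⟨x,α⟩ ≥ k} and H_{α;k}^- = {x ∈ E : ⟨x,α⟩ ≤ k}. Let λ ∈ P^+ be a dominant coweight. Then the intersection of the coweight lattice P with all closed half-spaces H_{α;k}^± (α ∈ R, k ∈ ℤ) that contain both 0 and λ equals {μ ∈ P^+ : λ − μ ∈ P^+}. -/
import Mathlib


open scoped InnerProductSpace BigOperators

noncomputable section

variable {E : Type*} [NormedAddCommGroup E] [InnerProductSpace ℝ E]

/-- The coroot `α^∨ = 2α/⟨α,α⟩` of a root `α`. -/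
def coroot (α : E) : E := (2 / ⟪α, α⟫_ℝ) • α

/-- The reflection in the hyperplane orthogonal to `α`. -/
def reflAt (α : E) (x : E) : E := x - ((2 * ⟪x, α⟫_ℝ / ⟪α, α⟫_ℝ) • α)

/-- `R` is a (crystallographic, possibly non-reduced) root system in `E`. -/
structure IsRootSystem (R : Set E) : Prop where
  finite : R.Finite
  nonzero : ∀ α ∈ R, α ≠ 0
  spans : Submodule.span ℝ R = ⊤
  reflect_mem : ∀ α ∈ R, ∀ β ∈ R, reflAt α β ∈ R
  crystallographic : ∀ α ∈ R, ∀ β ∈ R, ∃ z : ℤ, (z : ℝ) = 2 * ⟪β, α⟫_ℝ / ⟪α, α⟫_ℝ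

/-- `R` is an irreducible root system: it admits no splitting into two nonempty
mutually orthogonal parts. -/
def IsIrreducibleRS (R : Set E) : Prop :=
  ∀ R₁ R₂ : Set E, R = R₁ ∪ R₂ → (∀ α ∈ R₁, ∀ β ∈ R₂, ⟪α, β⟫_ℝ = 0) →
    R₁ = ∅ ∨ R₂ = ∅

/-- `a : Fin n → E` is a base of the root system `R`: the `a i` are linearly independent
roots and every root is an integer combination of them with coefficients all of the
same sign. -/
def IsBaseOf (R : Set E) {n : ℕ} (a : Fin n → E) : Prop :=
  (∀ i, a i ∈ R) ∧ LinearIndependent ℝ a ∧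
    ∀ β ∈ R, (∃ c : Fin n → ℕ, β = ∑ i, (c i : ℝ) • a i) ∨
      (∃ c : Fin n → ℕ, β = -(∑ i, (c i : ℝ) • a i))

variable {n : ℕ}

/-- The positive roots with respect to the base `a`. -/
def posRoots (R : Set E) (a : Fin n → E) : Set E :=
  {β | β ∈ R ∧ ∃ c : Fin n → ℕ, β = ∑ i, (c i : ℝ) • a i}

/-- The closed half-space `H_{α;k}^+ = {x : ⟨x,α⟩ ≥ k}`. -/
def halfPlus (α : E) (k : ℤ) : Set E := {x | (k : ℝ) ≤ ⟪x, α⟫_ℝ}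

/-- The closed half-space `H_{α;k}^- = {x : ⟨x,α⟩ ≤ k}`. -/
def halfMinus (α : E) (k : ℤ) : Set E := {x | ⟪x, α⟫_ℝ ≤ (k : ℝ)}

lemma inner_sum_fw {n : ℕ} (fw a : Fin n → E)
    (hfw : ∀ i j, ⟪fw i, a j⟫_ℝ = if i = j then 1 else 0)
    (c : Fin n → ℝ) (j : Fin n) :
    ⟪∑ i, c i • fw i, a j⟫_ℝ = c j := by
  rw [sum_inner]
  simp [inner_smul_left, hfw]

lemma inner_pos_comb {n : ℕ} (a : Fin n → E) (ν : E) (hν : ∀ i, 0 ≤ ⟪ν, a i⟫_ℝ)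
    (c : Fin n → ℕ) : 0 ≤ ⟪ν, ∑ i, (c i : ℝ) • a i⟫_ℝ := by
  rw [inner_sum]
  refine Finset.sum_nonneg fun i _ => ?_
  rw [real_inner_smul_right]
  exact mul_nonneg (by positivity) (hν i)

/-- For a dominant coweight `λ ∈ P⁺`, the set of coweights lying in
every closed half-space `H_{α;k}^±` (`α ∈ R`, `k ∈ ℤ`) containing both `0` and `λ`
equals `{μ ∈ P⁺ : λ - μ ∈ P⁺}`. -/
theorem conv_zero_lam
    {E : Type*} [NormedAddCommGroup E] [InnerProductSpace ℝ E] {n : ℕ}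
    (R : Set E) (a : Fin n → E) (fw : Fin n → E)
    (hR : IsRootSystem R) (hirr : IsIrreducibleRS R) (hB : IsBaseOf R a)
    (hfw : ∀ i j, ⟪fw i, a j⟫_ℝ = if i = j then 1 else 0)
    (P : Set E) (hP : P = {μ | ∃ c : Fin n → ℤ, μ = ∑ i, (c i : ℝ) • fw i})
    (Pplus : Set E) (hPplus : Pplus = {μ ∈ P | ∀ i, 0 ≤ ⟪μ, a i⟫_ℝ})
    (lam : E) (hlam : lam ∈ Pplus) :
    {μ ∈ P | ∀ α ∈ R, ∀ k : ℤ,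
        ((0 : E) ∈ halfPlus α k → lam ∈ halfPlus α k → μ ∈ halfPlus α k) ∧
        ((0 : E) ∈ halfMinus α k → lam ∈ halfMinus α k → μ ∈ halfMinus α k)} =
      {μ ∈ Pplus | lam - μ ∈ Pplus} := by
  subst hPplus
  obtain ⟨hlamP, hlampos⟩ := hlam
  obtain ⟨cl, hcl⟩ := hP ▸ hlamP
  have hlamj : ∀ j, ⟪lam, a j⟫_ℝ = (cl j : ℝ) := fun j => by
    rw [hcl]; exact inner_sum_fw fw a hfw _ j
  ext μ
  simp only [Set.mem_setOf_eq]
  constructor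
  · rintro ⟨hμP, h⟩
    obtain ⟨cm, hcm⟩ := hP ▸ hμP
    have hμj : ∀ j, ⟪μ, a j⟫_ℝ = (cm j : ℝ) := fun j => by
      rw [hcm]; exact inner_sum_fw fw a hfw _ j
    have hμpos : ∀ i, 0 ≤ ⟪μ, a i⟫_ℝ := by
      intro i
      have := (h (a i) (hB.1 i) 0).1 (by simp [halfPlus]) (by simpa [halfPlus] using hlampos i)
      simpa [halfPlus] using this
    refine ⟨⟨hμP, hμpos⟩, ?_, ?_⟩
    · rw [hP]
      refine ⟨fun i => cl i - cm i, ?_⟩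
      rw [hcl, hcm, ← Finset.sum_sub_distrib]
      congr 1; ext i
      push_cast
      rw [sub_smul]
    · intro i
      have := (h (a i) (hB.1 i) (cl i)).2
        (by simp only [halfMinus, Set.mem_setOf_eq, inner_zero_left]
            rw [← hlamj i]; exact hlampos i)
        (by simp only [halfMinus, Set.mem_setOf_eq]; rw [hlamj i])
      simp only [halfMinus, Set.mem_setOf_eq] at this
      rw [inner_sub_left, hlamj i]
      linarith
  · rintro ⟨⟨hμP, hμpos⟩, hdP, hdpos⟩
    refine ⟨hμP, ?_⟩
    intro α hα k
    rcases hB.2.2 α hα with ⟨c, hc⟩ | ⟨c, hc⟩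
    · constructor
      · intro h0 _
        simp only [halfPlus, Set.mem_setOf_eq, inner_zero_left] at h0 ⊢
        have := inner_pos_comb a μ hμpos c
        rw [← hc] at this
        linarith
      · intro _ hl
        simp only [halfMinus, Set.mem_setOf_eq] at hl ⊢
        have := inner_pos_comb a (lam - μ) hdpos c
        rw [← hc, inner_sub_left] at this
        linarith
    · constructor
      · intro _ hl
        simp only [halfPlus, Set.mem_setOf_eq] at hl ⊢
        have := inner_pos_comb a (lam - μ) hdpos c
        rw [inner_sub_left] at this
        have h2 : ⟪μ, α⟫_ℝ = -⟪μ, ∑ i, (c i : ℝ) • a i⟫_ℝ := by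
          rw [hc, inner_neg_right]
        have h3 : ⟪lam, α⟫_ℝ = -⟪lam, ∑ i, (c i : ℝ) • a i⟫_ℝ := by
          rw [hc, inner_neg_right]
        rw [h2]; rw [h3] at hl
        linarith
      · intro h0 _
        simp only [halfMinus, Set.mem_setOf_eq, inner_zero_left] at h0 ⊢
        have := inner_pos_comb a μ hμpos c
        have h2 : ⟪μ, α⟫_ℝ = -⟪μ, ∑ i, (c i : ℝ) • a i⟫_ℝ := by
          rw [hc, inner_neg_right]
        rw [h2]
        linarith
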